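/- Let H, G^ℓ : ℝ^d → ℝ^d (ℓ = 1,…,d) be locally Lipschitz with sub-linear growth |H(y)| ≤ C_H(1+|y|), |G^ℓ(y)| ≤ C_{G^ℓ}(1+|y|). For i = 1,2, let μ^i : [0,T] → 𝒫₁(ℝ^d) be W₁-continuous with supp μ^i(t) ⊂ B(0,R), and let μ^i_{mℓ}(t) = (1/m)Σ_{k=1}^m u^i_{kℓ}(t) δ_{Y^i_k(t)} be weighted empirical measures supported on absolutely continuous trajectories t ↦ Y^i_k(t), with controls u^i_{kℓ} ∈ L^∞([0,T]) and M = max_{ℓ,k,i} ‖u^i_{kℓ}‖_∞. Let 𝒯^i_t(P) denote the flow of Ẋ = (H * μ^i(t))(X) + Σ_{ℓ=1}^d (G^ℓ * μ^i_{mℓ}(t))(X) starting from P at time 0. Fix r > 0. Then there exist constants ρ > 0 and L > 0, depending only on r, the growth constants, R, T and M, such that whenever |P_1| ≤ r and |P_2| ≤ r one has, for all t ∈ [0,T]: |𝒯^1_t(P_1) − 𝒯^2_t(P_2)| ≤ e^{Lt}|P_1 − P_2| + ∫_0^t e^{L(t−s)} ‖(H * μ^1(s) + Σ_ℓ G^ℓ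 * μ^1_{mℓ}(s)) − (H * μ^2(s) + Σ_ℓ G^ℓ * μ^2_{mℓ}(s))‖_{L^∞(B(0,ρ))} ds. -/

import Mathlib

open MeasureTheory Set Metric
open scoped BigOperators ENNReal

noncomputable section

/-- The set of couplings of two measures: probability measures on the product with the
prescribed marginals. -/
def couplings {E : Type*} [MeasurableSpace E]
    (μ ν : Measure E) : Set (Measure (E × E)) :=
  {π | IsProbabilityMeasure π ∧ π.map Prod.fst = μ ∧ π.map Prod.snd = ν}

/-- The 1-Wasserstein distance `W₁(μ,ν) = inf_{π ∈ Π(μ,ν)} ∫ |x−y| dπ(x,y)`. -/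
def W1 {E : Type*} [MeasurableSpace E] [PseudoMetricSpace E]
    (μ ν : Measure E) : ℝ :=
  sInf ((fun π : Measure (E × E) => ∫ p, dist p.1 p.2 ∂π) '' couplings μ ν)

/-- A measure has finite first moment if `x ↦ ‖x‖` is integrable. -/
def HasFiniteFirstMoment {E : Type*} [MeasurableSpace E] [NormedAddCommGroup E]
    (μ : Measure E) : Prop :=
  Integrable (fun x => ‖x‖) μ

/-- The topological support of a measure. -/
def msupport {E : Type*} [MeasurableSpace E] [TopologicalSpace E]
    (μ : Measure E) : Set E :=
  {x | ∀ U ∈ nhds x, μ U ≠ 0}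

/-- The vector field `x ↦ (H*μ)(x) + ∑_ℓ (G^ℓ * μ_{mℓ})(x)` driving the flow, where
`μ_{mℓ} = (1/m) ∑_k u_{kℓ} δ_{Y_k}`. -/
def flowField {d m : ℕ}
    (H : EuclideanSpace ℝ (Fin d) → EuclideanSpace ℝ (Fin d))
    (G : Fin d → EuclideanSpace ℝ (Fin d) → EuclideanSpace ℝ (Fin d))
    (μ : Measure (EuclideanSpace ℝ (Fin d)))
    (u : Fin d → Fin m → ℝ) (Y : Fin m → EuclideanSpace ℝ (Fin d))
    (x : EuclideanSpace ℝ (Fin d)) : EuclideanSpace ℝ (Fin d) :=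
  (∫ ξ, H (x - ξ) ∂μ) + ∑ ℓ : Fin d, (m : ℝ)⁻¹ • ∑ k : Fin m, u ℓ k • G ℓ (x - Y k)

open intervalIntegral
open scoped NNReal

lemma msupport_compl_null {E : Type*} [MeasurableSpace E] [TopologicalSpace E]
    [SecondCountableTopology E] (μ : Measure E) : μ (msupport μ)ᶜ = 0 := by
  have hsub : (msupport μ)ᶜ ⊆ ⋃₀ {U | IsOpen U ∧ μ U = 0} := by
    intro x hx
    simp only [msupport, mem_compl_iff, mem_setOf_eq, not_forall] at hx
    obtain ⟨U, hU, hU0⟩ := hx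
    push_neg at hU0
    obtain ⟨V, hVU, hVopen, hxV⟩ := mem_nhds_iff.1 hU
    exact ⟨V, ⟨hVopen, measure_mono_null hVU hU0⟩, hxV⟩
  obtain ⟨S, hScount, hSsub, hSeq⟩ :=
    TopologicalSpace.isOpen_sUnion_countable {U | IsOpen U ∧ μ U = 0} (fun U hU => hU.1)
  refine measure_mono_null (hsub.trans hSeq.symm.subset) ?_
  exact (measure_sUnion_null_iff hScount).2 (fun s hs => (hSsub hs).2)

lemma LocallyLipschitz.exists_bound_on_compact {E F : Type*}
    [NormedAddCommGroup E] [NormedAddCommGroup F]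
    {f : E → F} (hf : LocallyLipschitz f) {K : Set E} (hK : IsCompact K) :
    ∃ C : ℝ, 0 ≤ C ∧ ∀ x ∈ K, ∀ y ∈ K, ‖f x - f y‖ ≤ C * ‖x - y‖ := by
  classical
  have h1 : ∀ x : E, ∃ (c : ℝ≥0) (ε : ℝ), 0 < ε ∧ LipschitzOnWith c f (ball x (2*ε)) := by
    intro x
    obtain ⟨c, t, ht, hlip⟩ := hf x
    obtain ⟨ε, hεpos, hball⟩ := Metric.mem_nhds_iff.1 ht
    refine ⟨c, ε/2, by positivity, hlip.mono ?_⟩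
    intro z hz
    apply hball
    have : (2:ℝ) * (ε/2) = ε := by ring
    simpa [this] using hz
  choose c ε hε hlip using h1
  obtain ⟨Mf, hMf⟩ := ((hK.image hf.continuous).isBounded).exists_norm_le
  obtain ⟨s, hsK, hcover⟩ := hK.elim_nhds_subcover (fun x => ball x (ε x))
    (fun x _ => ball_mem_nhds x (hε x))
  by_cases hs : s.Nonempty
  · set ε0 : ℝ := s.inf' hs ε with hε0def
    have hε0pos : 0 < ε0 := by
      rw [hε0def, Finset.lt_inf'_iff]
      exact fun b _ => hε b
    set C1 : ℝ≥0 := s.sup c with hC1def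
    have hMf0 : 0 ≤ Mf := by
      obtain ⟨x, hx⟩ := hs
      exact le_trans (norm_nonneg _) (hMf _ (mem_image_of_mem f (hsK x hx)))
    refine ⟨max (C1:ℝ) (2*Mf/ε0), le_max_of_le_left C1.coe_nonneg, ?_⟩
    intro x hx y hy
    rcases lt_or_ge (dist x y) ε0 with hlt | hge
    · obtain ⟨z, hzs, hxz⟩ : ∃ z ∈ s, x ∈ ball z (ε z) := by
        simpa using hcover hx
      have hεz : ε0 ≤ ε z := Finset.inf'_le _ hzs
      have hx' : x ∈ ball z (2 * ε z) := by
        refine mem_ball.2 (lt_of_lt_of_le (mem_ball.1 hxz) ?_)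
        nlinarith [hε z]
      have hy' : y ∈ ball z (2 * ε z) := by
        refine mem_ball.2 ?_
        calc dist y z ≤ dist y x + dist x z := dist_triangle _ _ _
          _ < ε0 + ε z := by
              rw [dist_comm y x]
              exact add_lt_add_of_lt_of_lt hlt (mem_ball.1 hxz)
          _ ≤ 2 * ε z := by nlinarith
      have hd := (hlip z).dist_le_mul x hx' y hy'
      rw [dist_eq_norm, dist_eq_norm] at hd
      refine hd.trans ?_
      have hcz : (c z : ℝ) ≤ C1 := by
        exact_mod_cast NNReal.coe_le_coe.2 (Finset.le_sup hzs)
      have := mul_le_mul_of_nonneg_right (hcz.trans (le_max_left _ (2*Mf/ε0)))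
        (norm_nonneg (x - y))
      linarith
    · have h1 : ‖f x - f y‖ ≤ 2 * Mf := by
        calc ‖f x - f y‖ ≤ ‖f x‖ + ‖f y‖ := norm_sub_le _ _
          _ ≤ Mf + Mf := add_le_add (hMf _ (mem_image_of_mem f hx)) (hMf _ (mem_image_of_mem f hy))
          _ = 2 * Mf := by ring
      have hxy : ε0 ≤ ‖x - y‖ := by rwa [← dist_eq_norm]
      have h2 : 2 * Mf ≤ (2*Mf/ε0) * ‖x - y‖ := by
        rw [div_mul_eq_mul_div, le_div_iff₀ hε0pos]
        nlinarith
      refine h1.trans (h2.trans ?_)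
      exact mul_le_mul_of_nonneg_right (le_max_right _ _) (norm_nonneg _)
  · refine ⟨0, le_rfl, fun x hx => ?_⟩
    exfalso
    have := hcover hx
    rw [Finset.not_nonempty_iff_eq_empty.1 hs] at this
    simpa using this


lemma exp_antideriv {B t : ℝ} (s : ℝ) :
    ∫ τ in s..t, B * Real.exp (B*(t-τ)) = Real.exp (B*(t-s)) - 1 := by
  have hderiv : ∀ τ ∈ uIcc s t,
      HasDerivAt (fun τ => -Real.exp (B*(t-τ))) (B * Real.exp (B*(t-τ))) τ := by
    intro τ _
    have h1 : HasDerivAt (fun τ : ℝ => B*(t-τ)) (-B) τ := by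
      simpa using ((hasDerivAt_id τ).const_sub t).const_mul B
    have h3 : HasDerivAt (fun τ => -Real.exp (B*(t-τ))) _ τ := h1.exp.neg
    convert h3 using 1
    ring
  have hint : IntervalIntegrable (fun τ => B * Real.exp (B*(t-τ))) volume s t := by
    apply Continuous.intervalIntegrable
    fun_prop
  rw [intervalIntegral.integral_eq_sub_of_hasDerivAt hderiv hint]
  have h0 : t - t = 0 := by ring
  rw [h0]
  simp only [mul_zero, Real.exp_zero]
  ring

lemma Ioi_inter_Ioc' {s t : ℝ} (hs : 0 ≤ s) : Ioi s ∩ Ioc 0 t = Ioc s t := by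
  ext x
  simp only [mem_inter_iff, mem_Ioi, mem_Ioc]
  constructor
  · rintro ⟨h1, _, h3⟩; exact ⟨h1, h3⟩
  · rintro ⟨h1, h2⟩; exact ⟨h1, lt_of_le_of_lt hs h1, h2⟩

lemma Iio_inter_Ioc' {τ t : ℝ} (hτ : τ ≤ t) : Iio τ ∩ Ioc 0 t = Ioo 0 τ := by
  ext x
  simp only [mem_inter_iff, mem_Iio, mem_Ioc, mem_Ioo]
  constructor
  · rintro ⟨h1, h2, _⟩; exact ⟨h2, h1⟩
  · rintro ⟨h1, h2⟩; exact ⟨h2, h1, le_trans h2.le hτ⟩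

lemma exp_conv_identity {B t : ℝ} (hB : 0 ≤ B) (ht : 0 ≤ t) {h : ℝ → ℝ}
    (hh : IntervalIntegrable h volume 0 t) :
    ∫ s in (0:ℝ)..t, Real.exp (B*(t-s)) * h s
      = (∫ s in (0:ℝ)..t, h s)
        + ∫ τ in (0:ℝ)..t, B * Real.exp (B*(t-τ)) * (∫ s in (0:ℝ)..τ, h s) := by
  set μ0 := volume.restrict (Ioc (0:ℝ) t) with hμ0
  haveI : IsFiniteMeasure μ0 := by
    constructor
    rw [hμ0, Measure.restrict_apply_univ]
    exact measure_Ioc_lt_top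
  have hcontexp : Continuous (fun s : ℝ => Real.exp (B*(t-s))) := by fun_prop
  have hh0 : Integrable h μ0 := hh.1
  set h' := hh0.aestronglyMeasurable.mk h with hh'def
  have hh'sm : StronglyMeasurable h' := hh0.aestronglyMeasurable.stronglyMeasurable_mk
  have heq : h =ᵐ[μ0] h' := hh0.aestronglyMeasurable.ae_eq_mk
  have hh'0 : Integrable h' μ0 := hh0.congr heq
  have hsplit : ∫ s in (0:ℝ)..t, Real.exp (B*(t-s)) * h s
      = (∫ s in (0:ℝ)..t, h s) + ∫ s in (0:ℝ)..t, (Real.exp (B*(t-s)) - 1) * h s := by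
    have hint1 : IntervalIntegrable (fun s => (Real.exp (B*(t-s)) - 1) * h s) volume 0 t :=
      hh.continuousOn_mul ((hcontexp.sub continuous_const).continuousOn)
    rw [← intervalIntegral.integral_add hh hint1]
    apply intervalIntegral.integral_congr
    intro s _
    ring
  rw [hsplit]
  congr 1
  set k : ℝ → ℝ := fun τ => B * Real.exp (B*(t-τ)) with hk
  set F : ℝ × ℝ → ℝ :=
    Set.indicator {p : ℝ × ℝ | p.1 < p.2} (fun p => k p.2 * h p.1) with hF
  set F' : ℝ × ℝ → ℝ :=
    Set.indicator {p : ℝ × ℝ | p.1 < p.2} (fun p => k p.2 * h' p.1) with hF'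
  have hkcont : Continuous k := continuous_const.mul hcontexp
  have hmeaslt : MeasurableSet {p : ℝ × ℝ | p.1 < p.2} :=
    measurableSet_lt measurable_fst measurable_snd
  have hF'meas : AEStronglyMeasurable F' (μ0.prod μ0) := by
    apply StronglyMeasurable.aestronglyMeasurable
    apply StronglyMeasurable.indicator _ hmeaslt
    exact ((hkcont.comp continuous_snd).stronglyMeasurable).mul
      (hh'sm.comp_measurable measurable_fst)
  have hprodrestrict : μ0.prod μ0
      = (volume.prod volume).restrict (Ioc (0:ℝ) t ×ˢ Ioc (0:ℝ) t) := by
    rw [hμ0, Measure.prod_restrict]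
  have haemem : ∀ᵐ z ∂(μ0.prod μ0), z ∈ Ioc (0:ℝ) t ×ˢ Ioc (0:ℝ) t := by
    rw [hprodrestrict]
    exact ae_restrict_mem (measurableSet_Ioc.prod measurableSet_Ioc)
  have hF'int : Integrable F' (μ0.prod μ0) := by
    have hmaj : Integrable (fun z : ℝ × ℝ => (B * Real.exp (B*t) * |h' z.1|) * (1:ℝ))
        (μ0.prod μ0) :=
      Integrable.mul_prod (hh'0.abs.const_mul _) (integrable_const 1)
    apply Integrable.mono' (by simpa using hmaj) hF'meas
    filter_upwards [haemem] with z hz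
    have hz2 : z.2 ∈ Ioc (0:ℝ) t := hz.2
    have hexp : Real.exp (B*(t-z.2)) ≤ Real.exp (B*t) := by
      apply Real.exp_le_exp.2
      nlinarith [hz2.1]
    calc ‖F' z‖ ≤ ‖k z.2 * h' z.1‖ := norm_indicator_le_norm_self _ _
      _ = |k z.2| * |h' z.1| := abs_mul _ _
      _ ≤ (B * Real.exp (B*t)) * |h' z.1| := by
          apply mul_le_mul_of_nonneg_right _ (abs_nonneg _)
          rw [hk]
          simp only []
          rw [abs_mul, abs_of_nonneg hB, abs_of_nonneg (Real.exp_pos _).le]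
          exact mul_le_mul_of_nonneg_left hexp hB
  have hFF' : F =ᵐ[μ0.prod μ0] F' := by
    set N := toMeasurable μ0 {s | h s ≠ h' s} with hNdef
    have hN0 : μ0 N = 0 := by
      rw [hNdef, measure_toMeasurable]
      exact ae_iff.1 heq
    have hprodN : (μ0.prod μ0) (N ×ˢ (univ : Set ℝ)) = 0 := by
      rw [Measure.prod_prod, hN0, zero_mul]
    refine ae_iff.2 (measure_mono_null ?_ hprodN)
    intro z hz
    simp only [mem_setOf_eq] at hz
    refine ⟨?_, trivial⟩
    by_contra hz1
    apply hz
    have hhz : h z.1 = h' z.1 := by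
      by_contra hcc
      exact hz1 (subset_toMeasurable _ _ hcc)
    rw [hF, hF']
    simp only [Set.indicator_apply, hhz]
  have hFint : Integrable F (μ0.prod μ0) := hF'int.congr hFF'.symm
  have hLHS : ∫ s in (0:ℝ)..t, (Real.exp (B*(t-s)) - 1) * h s
      = ∫ s, (∫ τ, F (s, τ) ∂μ0) ∂μ0 := by
    rw [intervalIntegral.integral_of_le ht]
    apply setIntegral_congr_fun measurableSet_Ioc
    intro s hs
    show (Real.exp (B*(t-s)) - 1) * h s = ∫ τ, F (s, τ) ∂μ0
    have h1 : Real.exp (B*(t-s)) - 1 = ∫ τ in s..t, k τ := (exp_antideriv s).symm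
    have h2 : ∫ τ in s..t, k τ = ∫ τ, Set.indicator (Ioi s) k τ ∂μ0 := by
      rw [intervalIntegral.integral_of_le hs.2, hμ0, MeasureTheory.integral_indicator measurableSet_Ioi,
        Measure.restrict_restrict measurableSet_Ioi, Ioi_inter_Ioc' hs.1.le]
    have h3 : ∀ τ, Set.indicator (Ioi s) k τ * h s = F (s, τ) := by
      intro τ
      rw [hF]
      simp only [Set.indicator_apply, mem_Ioi, mem_setOf_eq]
      by_cases hsτ : s < τ <;> simp [hsτ]
    rw [h1, h2, ← MeasureTheory.integral_mul_const]
    exact integral_congr_ae (Filter.Eventually.of_forall (fun τ => h3 τ))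
  have hswap : ∫ s, (∫ τ, F (s, τ) ∂μ0) ∂μ0 = ∫ τ, (∫ s, F (s, τ) ∂μ0) ∂μ0 := by
    apply MeasureTheory.integral_integral_swap
    exact hFint
  have hRHS : ∫ τ, (∫ s, F (s, τ) ∂μ0) ∂μ0
      = ∫ τ in (0:ℝ)..t, B * Real.exp (B*(t-τ)) * (∫ s in (0:ℝ)..τ, h s) := by
    rw [intervalIntegral.integral_of_le ht]
    apply setIntegral_congr_fun measurableSet_Ioc
    intro τ hτ
    show (∫ s, F (s, τ) ∂μ0) = B * Real.exp (B*(t-τ)) * ∫ s in (0:ℝ)..τ, h s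
    have h3 : ∀ s, F (s, τ) = Set.indicator (Iio τ) (fun s => k τ * h s) s := by
      intro s
      rw [hF]
      simp only [Set.indicator_apply, mem_Iio, mem_setOf_eq]
    have h4 : ∫ s, F (s, τ) ∂μ0 = ∫ s, Set.indicator (Iio τ) (fun s => k τ * h s) s ∂μ0 :=
      integral_congr_ae (Filter.Eventually.of_forall h3)
    rw [h4, hμ0, MeasureTheory.integral_indicator measurableSet_Iio,
      Measure.restrict_restrict measurableSet_Iio, Iio_inter_Ioc' hτ.2,
      MeasureTheory.integral_const_mul, ← MeasureTheory.integral_Ioc_eq_integral_Ioo,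
      ← intervalIntegral.integral_of_le hτ.1.le]
  rw [hLHS, hswap, hRHS]


lemma gronwall_integral {φ c : ℝ → ℝ} {a B T : ℝ} (hB : 0 ≤ B) (hT : 0 ≤ T)
    (hφ : ContinuousOn φ (Icc 0 T)) (hc : IntervalIntegrable c volume 0 T)
    (hineq : ∀ t ∈ Icc (0:ℝ) T, φ t ≤ a + ∫ s in (0:ℝ)..t, (B * φ s + c s)) :
    ∀ t ∈ Icc (0:ℝ) T, φ t ≤ Real.exp (B*t) * a
      + ∫ s in (0:ℝ)..t, Real.exp (B*(t-s)) * c s := by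
  intro t htI
  obtain ⟨ht0, htT⟩ := htI
  have hsub : uIcc (0:ℝ) t ⊆ uIcc (0:ℝ) T := by
    rw [uIcc_of_le ht0, uIcc_of_le hT]
    exact Icc_subset_Icc le_rfl htT
  have hφint : IntervalIntegrable φ volume 0 t := by
    apply ContinuousOn.intervalIntegrable
    rw [uIcc_of_le ht0]
    exact hφ.mono (Icc_subset_Icc le_rfl htT)
  have hcint : IntervalIntegrable c volume 0 t := hc.mono_set hsub
  set h : ℝ → ℝ := fun s => B * φ s + c s with hhdef
  have hhint : IntervalIntegrable h volume 0 t := (hφint.const_mul B).add hcint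
  set Hf : ℝ → ℝ := fun τ => ∫ s in (0:ℝ)..τ, h s with hHf
  have hid := exp_conv_identity hB ht0 hhint
  have hexpcont : Continuous (fun s : ℝ => Real.exp (B*(t-s))) := by fun_prop
  have h_e_c : IntervalIntegrable (fun s => Real.exp (B*(t-s)) * c s) volume 0 t :=
    hcint.continuousOn_mul hexpcont.continuousOn
  have h_e_φ : IntervalIntegrable (fun s => Real.exp (B*(t-s)) * (B * φ s)) volume 0 t :=
    (hφint.const_mul B).continuousOn_mul hexpcont.continuousOn
  have hHcont : ContinuousOn Hf (uIcc 0 t) :=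
    intervalIntegral.continuousOn_primitive_interval' hhint left_mem_uIcc
  have h_e_H : IntervalIntegrable (fun τ => B * Real.exp (B*(t-τ)) * Hf τ) volume 0 t := by
    apply ContinuousOn.intervalIntegrable
    exact (Continuous.continuousOn (by fun_prop)).mul hHcont
  have h_e_a : IntervalIntegrable (fun τ => a * (B * Real.exp (B*(t-τ)))) volume 0 t := by
    apply Continuous.intervalIntegrable
    fun_prop
  have h_e_φa : IntervalIntegrable (fun τ => B * Real.exp (B*(t-τ)) * (φ τ - a)) volume 0 t := by
    have : (fun τ => B * Real.exp (B*(t-τ)) * (φ τ - a))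
        = fun τ => Real.exp (B*(t-τ)) * (B * φ τ) - a * (B * Real.exp (B*(t-τ))) := by
      funext τ; ring
    rw [this]
    exact h_e_φ.sub h_e_a
  have hφa : ∀ τ ∈ Icc (0:ℝ) t, φ τ - a ≤ Hf τ := by
    intro τ hτ
    have := hineq τ ⟨hτ.1, hτ.2.trans htT⟩
    simp only [hHf, hhdef]
    linarith
  have e2 : ∫ s in (0:ℝ)..t, Real.exp (B*(t-s)) * h s
      = (∫ s in (0:ℝ)..t, Real.exp (B*(t-s)) * (B * φ s))
        + ∫ s in (0:ℝ)..t, Real.exp (B*(t-s)) * c s := by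
    rw [← intervalIntegral.integral_add h_e_φ h_e_c]
    apply intervalIntegral.integral_congr
    intro s _
    simp only [hhdef]
    ring
  have e3 : (∫ τ in (0:ℝ)..t, B * Real.exp (B*(t-τ)) * (φ τ - a))
      ≤ ∫ τ in (0:ℝ)..t, B * Real.exp (B*(t-τ)) * Hf τ := by
    apply intervalIntegral.integral_mono_on ht0 h_e_φa h_e_H
    intro τ hτ
    apply mul_le_mul_of_nonneg_left (hφa τ hτ)
    positivity
  have e4 : ∫ τ in (0:ℝ)..t, B * Real.exp (B*(t-τ)) * (φ τ - a)
      = (∫ s in (0:ℝ)..t, Real.exp (B*(t-s)) * (B * φ s)) - a * (Real.exp (B*t) - 1) := by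
    have hcg : ∀ τ, B * Real.exp (B*(t-τ)) * (φ τ - a)
        = Real.exp (B*(t-τ)) * (B * φ τ) - a * (B * Real.exp (B*(t-τ))) := fun τ => by ring
    rw [intervalIntegral.integral_congr (fun τ _ => hcg τ),
      intervalIntegral.integral_sub h_e_φ h_e_a]
    congr 1
    rw [intervalIntegral.integral_const_mul, exp_antideriv (0:ℝ)]
    norm_num
  have hφt := hineq t ⟨ht0, htT⟩
  have key : Hf t ≤ (Real.exp (B*t) - 1) * a + ∫ s in (0:ℝ)..t, Real.exp (B*(t-s)) * c s := by
    have : Hf t = (∫ s in (0:ℝ)..t, Real.exp (B*(t-s)) * h s)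
        - ∫ τ in (0:ℝ)..t, B * Real.exp (B*(t-τ)) * Hf τ := by
      simp only [hHf]
      linarith [hid]
    rw [this, e2]
    linarith [e3, e4]
  simp only [hHf, hhdef] at key hφt ⊢
  linarith


section aux
variable {d m : ℕ}
local notation "E" => EuclideanSpace ℝ (Fin d)

lemma flowField_norm_le (hm : 0 < m)
    {H : E → E} {G : Fin d → E → E} {μ : Measure E}
    {u : Fin d → Fin m → ℝ} {Y : Fin m → E}
    {C_H R M RY : ℝ} {C_G : Fin d → ℝ}
    (hCH0 : 0 ≤ C_H) (hR : 0 ≤ R) (hM : 0 ≤ M) (hRY : 0 ≤ RY)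
    (hHgrowth : ∀ y, ‖H y‖ ≤ C_H * (1 + ‖y‖))
    (hGgrowth : ∀ ℓ y, ‖G ℓ y‖ ≤ C_G ℓ * (1 + ‖y‖))
    [IsProbabilityMeasure μ] (hsupp : ∀ᵐ ξ ∂μ, ‖ξ‖ ≤ R)
    (hu : ∀ ℓ k, |u ℓ k| ≤ M) (hY : ∀ k, ‖Y k‖ ≤ RY) (x : E) :
    ‖flowField H G μ u Y x‖
      ≤ (C_H*(1+R) + (∑ ℓ : Fin d, M * C_G ℓ)*(1+RY))
        + (C_H + ∑ ℓ : Fin d, M * C_G ℓ)*‖x‖ := by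
  have hCG0 : ∀ ℓ, 0 ≤ C_G ℓ := by
    intro ℓ
    have h1 := hGgrowth ℓ 0
    rw [norm_zero] at h1
    have h2 := norm_nonneg (G ℓ 0)
    linarith
  have hIbound : ‖∫ ξ, H (x - ξ) ∂μ‖ ≤ C_H * (1 + ‖x‖ + R) := by
    have h1 : ∀ᵐ ξ ∂μ, ‖H (x - ξ)‖ ≤ C_H * (1 + ‖x‖ + R) := by
      filter_upwards [hsupp] with ξ hξ
      refine (hHgrowth _).trans ?_
      have : ‖x - ξ‖ ≤ ‖x‖ + ‖ξ‖ := norm_sub_le _ _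
      nlinarith
    have := norm_integral_le_of_norm_le_const h1
    simpa using this
  have hSbound : ∀ ℓ : Fin d, ‖(m : ℝ)⁻¹ • ∑ k : Fin m, u ℓ k • G ℓ (x - Y k)‖
      ≤ M * C_G ℓ * (1 + ‖x‖ + RY) := by
    intro ℓ
    rw [norm_smul]
    have h2 : ‖∑ k : Fin m, u ℓ k • G ℓ (x - Y k)‖
        ≤ (m : ℝ) * (M * C_G ℓ * (1 + ‖x‖ + RY)) := by
      refine (norm_sum_le _ _).trans ?_
      have h3 : ∀ k : Fin m, ‖u ℓ k • G ℓ (x - Y k)‖ ≤ M * C_G ℓ * (1 + ‖x‖ + RY) := by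
        intro k
        rw [norm_smul, Real.norm_eq_abs]
        have h4 : ‖G ℓ (x - Y k)‖ ≤ C_G ℓ * (1 + ‖x‖ + RY) := by
          refine (hGgrowth ℓ _).trans ?_
          have h5 : ‖x - Y k‖ ≤ ‖x‖ + ‖Y k‖ := norm_sub_le _ _
          have := hY k
          nlinarith [hCG0 ℓ]
        calc |u ℓ k| * ‖G ℓ (x - Y k)‖ ≤ M * (C_G ℓ * (1 + ‖x‖ + RY)) := by
              apply mul_le_mul (hu ℓ k) h4 (norm_nonneg _) hM
          _ = M * C_G ℓ * (1 + ‖x‖ + RY) := by ring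
      refine (Finset.sum_le_sum (fun k _ => h3 k)).trans ?_
      simp [Finset.sum_const, Finset.card_univ]
    have hminv : ‖(m : ℝ)⁻¹‖ = (m : ℝ)⁻¹ := by
      rw [Real.norm_eq_abs, abs_of_nonneg]
      positivity
    rw [hminv]
    have hmne : (m : ℝ) ≠ 0 := by positivity
    calc (m : ℝ)⁻¹ * ‖∑ k : Fin m, u ℓ k • G ℓ (x - Y k)‖
        ≤ (m : ℝ)⁻¹ * ((m : ℝ) * (M * C_G ℓ * (1 + ‖x‖ + RY))) := by
          apply mul_le_mul_of_nonneg_left h2 (by positivity)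
      _ = M * C_G ℓ * (1 + ‖x‖ + RY) := by field_simp
  have hSsum : ‖∑ ℓ : Fin d, (m : ℝ)⁻¹ • ∑ k : Fin m, u ℓ k • G ℓ (x - Y k)‖
      ≤ (∑ ℓ : Fin d, M * C_G ℓ) * (1 + ‖x‖ + RY) := by
    refine (norm_sum_le _ _).trans ?_
    rw [Finset.sum_mul]
    exact Finset.sum_le_sum (fun ℓ _ => hSbound ℓ)
  have := norm_add_le (∫ ξ, H (x - ξ) ∂μ)
    (∑ ℓ : Fin d, (m : ℝ)⁻¹ • ∑ k : Fin m, u ℓ k • G ℓ (x - Y k))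
  rw [flowField]
  have hSG0 : 0 ≤ ∑ ℓ : Fin d, M * C_G ℓ :=
    Finset.sum_nonneg (fun ℓ _ => mul_nonneg hM (hCG0 ℓ))
  nlinarith [hIbound, hSsum]

lemma integrable_H_shift {H : E → E} (hHc : Continuous H) {C_H R : ℝ}
    (hHgrowth : ∀ y, ‖H y‖ ≤ C_H * (1 + ‖y‖))
    {μ : Measure E} [IsProbabilityMeasure μ] (hsupp : ∀ᵐ ξ ∂μ, ‖ξ‖ ≤ R) (x : E) :
    Integrable (fun ξ => H (x - ξ)) μ := by
  apply Integrable.mono' (integrable_const (C_H * (1 + ‖x‖ + R)))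
  · exact (hHc.comp (continuous_const.sub continuous_id)).aestronglyMeasurable
  · filter_upwards [hsupp] with ξ hξ
    refine (hHgrowth _).trans ?_
    have h1 : ‖x - ξ‖ ≤ ‖x‖ + ‖ξ‖ := norm_sub_le _ _
    have hCH0 : 0 ≤ C_H := by
      have h3 := hHgrowth 0
      rw [norm_zero] at h3
      have h2 := norm_nonneg (H 0)
      linarith
    nlinarith

lemma flowField_lip (hm : 0 < m)
    {H : E → E} {G : Fin d → E → E} {μ : Measure E}
    {u : Fin d → Fin m → ℝ} {Y : Fin m → E}
    {C_H R M RY ρ K_H : ℝ} {K_G : Fin d → ℝ}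
    (hHc : Continuous H)
    (hHgrowth : ∀ y, ‖H y‖ ≤ C_H * (1 + ‖y‖))
    (hM : 0 ≤ M)
    (hKH : ∀ a ∈ closedBall (0:E) (ρ+R), ∀ b ∈ closedBall (0:E) (ρ+R),
      ‖H a - H b‖ ≤ K_H * ‖a - b‖)
    (hKG : ∀ ℓ, ∀ a ∈ closedBall (0:E) (ρ+RY), ∀ b ∈ closedBall (0:E) (ρ+RY),
      ‖G ℓ a - G ℓ b‖ ≤ K_G ℓ * ‖a - b‖)
    (hKH0 : 0 ≤ K_H) (hKG0 : ∀ ℓ, 0 ≤ K_G ℓ)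
    [IsProbabilityMeasure μ] (hsupp : ∀ᵐ ξ ∂μ, ‖ξ‖ ≤ R)
    (hu : ∀ ℓ k, |u ℓ k| ≤ M) (hY : ∀ k, ‖Y k‖ ≤ RY)
    {x x' : E} (hx : ‖x‖ ≤ ρ) (hx' : ‖x'‖ ≤ ρ) :
    ‖flowField H G μ u Y x - flowField H G μ u Y x'‖
      ≤ (K_H + ∑ ℓ : Fin d, M * K_G ℓ) * ‖x - x'‖ := by
  have hint : Integrable (fun ξ => H (x - ξ)) μ := integrable_H_shift hHc hHgrowth hsupp x
  have hint' : Integrable (fun ξ => H (x' - ξ)) μ := integrable_H_shift hHc hHgrowth hsupp x'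
  have hSsub : (∑ ℓ : Fin d, (m : ℝ)⁻¹ • ∑ k : Fin m, u ℓ k • G ℓ (x - Y k))
        - (∑ ℓ : Fin d, (m : ℝ)⁻¹ • ∑ k : Fin m, u ℓ k • G ℓ (x' - Y k))
      = ∑ ℓ : Fin d, (m : ℝ)⁻¹ • ∑ k : Fin m, u ℓ k • (G ℓ (x - Y k) - G ℓ (x' - Y k)) := by
    rw [← Finset.sum_sub_distrib]
    apply Finset.sum_congr rfl
    intro ℓ _
    rw [← smul_sub, ← Finset.sum_sub_distrib]
    congr 1
    apply Finset.sum_congr rfl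
    intro k _
    rw [← smul_sub]
  have hIsub : ∫ ξ, (H (x - ξ) - H (x' - ξ)) ∂μ
      = (∫ ξ, H (x - ξ) ∂μ) - ∫ ξ, H (x' - ξ) ∂μ := integral_sub hint hint'
  have hdiff : flowField H G μ u Y x - flowField H G μ u Y x'
      = (∫ ξ, (H (x - ξ) - H (x' - ξ)) ∂μ)
        + ∑ ℓ : Fin d, (m : ℝ)⁻¹ • ∑ k : Fin m, u ℓ k • (G ℓ (x - Y k) - G ℓ (x' - Y k)) := by
    rw [flowField, flowField, hIsub, ← hSsub]
    abel
  rw [hdiff]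
  have hIbound : ‖∫ ξ, (H (x - ξ) - H (x' - ξ)) ∂μ‖ ≤ K_H * ‖x - x'‖ := by
    have h1 : ∀ᵐ ξ ∂μ, ‖H (x - ξ) - H (x' - ξ)‖ ≤ K_H * ‖x - x'‖ := by
      filter_upwards [hsupp] with ξ hξ
      have ha : x - ξ ∈ closedBall (0:E) (ρ+R) := by
        rw [mem_closedBall_zero_iff]
        exact (norm_sub_le _ _).trans (add_le_add hx hξ)
      have hb : x' - ξ ∈ closedBall (0:E) (ρ+R) := by
        rw [mem_closedBall_zero_iff]
        exact (norm_sub_le _ _).trans (add_le_add hx' hξ)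
      have := hKH _ ha _ hb
      have heq : (x - ξ) - (x' - ξ) = x - x' := by abel
      rwa [heq] at this
    have := norm_integral_le_of_norm_le_const h1
    simpa using this
  have hY' : ∀ k, ∀ z : E, ‖z‖ ≤ ρ → z - Y k ∈ closedBall (0:E) (ρ+RY) := by
    intro k z hz
    rw [mem_closedBall_zero_iff]
    exact (norm_sub_le _ _).trans (add_le_add hz (hY k))
  have hSbound : ∀ ℓ : Fin d, ‖(m : ℝ)⁻¹ • ∑ k : Fin m, u ℓ k • (G ℓ (x - Y k) - G ℓ (x' - Y k))‖
      ≤ M * K_G ℓ * ‖x - x'‖ := by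
    intro ℓ
    rw [norm_smul]
    have h2 : ‖∑ k : Fin m, u ℓ k • (G ℓ (x - Y k) - G ℓ (x' - Y k))‖
        ≤ (m : ℝ) * (M * K_G ℓ * ‖x - x'‖) := by
      refine (norm_sum_le _ _).trans ?_
      have h3 : ∀ k : Fin m, ‖u ℓ k • (G ℓ (x - Y k) - G ℓ (x' - Y k))‖
          ≤ M * K_G ℓ * ‖x - x'‖ := by
        intro k
        rw [norm_smul, Real.norm_eq_abs]
        have h4 : ‖G ℓ (x - Y k) - G ℓ (x' - Y k)‖ ≤ K_G ℓ * ‖x - x'‖ := by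
          have := hKG ℓ _ (hY' k x hx) _ (hY' k x' hx')
          have heq : (x - Y k) - (x' - Y k) = x - x' := by abel
          rwa [heq] at this
        calc |u ℓ k| * ‖G ℓ (x - Y k) - G ℓ (x' - Y k)‖
            ≤ M * (K_G ℓ * ‖x - x'‖) := by
              apply mul_le_mul (hu ℓ k) h4 (norm_nonneg _)
                hM
          _ = M * K_G ℓ * ‖x - x'‖ := by ring
      refine (Finset.sum_le_sum (fun k _ => h3 k)).trans ?_
      simp [Finset.sum_const, Finset.card_univ]
    have hminv : ‖(m : ℝ)⁻¹‖ = (m : ℝ)⁻¹ := by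
      rw [Real.norm_eq_abs, abs_of_nonneg]
      positivity
    rw [hminv]
    have hmne : (m : ℝ) ≠ 0 := by positivity
    calc (m : ℝ)⁻¹ * ‖∑ k : Fin m, u ℓ k • (G ℓ (x - Y k) - G ℓ (x' - Y k))‖
        ≤ (m : ℝ)⁻¹ * ((m : ℝ) * (M * K_G ℓ * ‖x - x'‖)) := by
          apply mul_le_mul_of_nonneg_left h2 (by positivity)
      _ = M * K_G ℓ * ‖x - x'‖ := by field_simp
  have hSsum : ‖∑ ℓ : Fin d, (m : ℝ)⁻¹ • ∑ k : Fin m, u ℓ k • (G ℓ (x - Y k) - G ℓ (x' - Y k))‖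
      ≤ (∑ ℓ : Fin d, M * K_G ℓ) * ‖x - x'‖ := by
    refine (norm_sum_le _ _).trans ?_
    rw [Finset.sum_mul]
    exact Finset.sum_le_sum (fun ℓ _ => hSbound ℓ)
  have htri := norm_add_le (∫ ξ, (H (x - ξ) - H (x' - ξ)) ∂μ)
    (∑ ℓ : Fin d, (m : ℝ)⁻¹ • ∑ k : Fin m, u ℓ k • (G ℓ (x - Y k) - G ℓ (x' - Y k)))
  have : (K_H + ∑ ℓ : Fin d, M * K_G ℓ) * ‖x - x'‖
      = K_H * ‖x - x'‖ + (∑ ℓ : Fin d, M * K_G ℓ) * ‖x - x'‖ := by ring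
  rw [this]
  linarith

end aux


section cont
variable {d : ℕ}
local notation "E" => EuclideanSpace ℝ (Fin d)

lemma ae_mem_closedBall_of_msupport {μ : Measure E} {R : ℝ}
    (hsupp : msupport μ ⊆ closedBall (0:E) R) :
    ∀ᵐ ξ ∂μ, ξ ∈ closedBall (0:E) R := by
  have h0 : μ (closedBall (0:E) R)ᶜ = 0 :=
    measure_mono_null (compl_subset_compl.2 hsupp) (msupport_compl_null μ)
  rw [ae_iff]
  exact h0

lemma conv_continuousOn {H : E → E} (hHc : Continuous H)
    {C_H R T ρ K_H : ℝ} (hT : 0 ≤ T)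
    (hHgrowth : ∀ y, ‖H y‖ ≤ C_H * (1 + ‖y‖))
    (hKH : ∀ a ∈ closedBall (0:E) (ρ+R), ∀ b ∈ closedBall (0:E) (ρ+R),
      ‖H a - H b‖ ≤ K_H * ‖a - b‖)
    (hKH0 : 0 ≤ K_H) (hR0 : 0 ≤ R)
    {μ : ℝ → Measure E}
    (hprob : ∀ t ∈ Icc (0:ℝ) T, IsProbabilityMeasure (μ t))
    (hsupp : ∀ t ∈ Icc (0:ℝ) T, msupport (μ t) ⊆ closedBall (0:E) R)
    (hcont : ∀ t ∈ Icc (0:ℝ) T, ∀ ε > 0, ∃ δ > 0, ∀ s ∈ Icc (0:ℝ) T,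
      |s - t| < δ → W1 (μ s) (μ t) < ε)
    {y : E} (hy : ‖y‖ ≤ ρ) :
    ContinuousOn (fun s => ∫ ξ, H (y - ξ) ∂(μ s)) (Icc 0 T) := by
  have hCH0 : 0 ≤ C_H := by
    have h3 := hHgrowth 0
    rw [norm_zero] at h3
    have h2 := norm_nonneg (H 0)
    linarith
  set f : E → E := fun ξ => H (y - ξ) with hfdef
  have hfc : Continuous f := hHc.comp (continuous_const.sub continuous_id)
  -- coupling estimate
  have hest : ∀ s ∈ Icc (0:ℝ) T, ∀ t ∈ Icc (0:ℝ) T, ∀ π ∈ couplings (μ s) (μ t),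
      ‖(∫ ξ, f ξ ∂(μ s)) - ∫ ξ, f ξ ∂(μ t)‖ ≤ K_H * ∫ p, dist p.1 p.2 ∂π := by
    intro s hs t ht π hπ
    obtain ⟨hπprob, hπ1, hπ2⟩ := hπ
    haveI := hπprob
    haveI := hprob s hs
    haveI := hprob t ht
    have hae1 : ∀ᵐ p : E × E ∂π, p.1 ∈ closedBall (0:E) R := by
      have hnull : π (Prod.fst ⁻¹' (closedBall (0:E) R)ᶜ) = 0 := by
        rw [← Measure.map_apply measurable_fst measurableSet_closedBall.compl, hπ1]
        exact measure_mono_null (compl_subset_compl.2 (hsupp s hs)) (msupport_compl_null _)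
      rw [ae_iff]
      exact hnull
    have hae2 : ∀ᵐ p : E × E ∂π, p.2 ∈ closedBall (0:E) R := by
      have hnull : π (Prod.snd ⁻¹' (closedBall (0:E) R)ᶜ) = 0 := by
        rw [← Measure.map_apply measurable_snd measurableSet_closedBall.compl, hπ2]
        exact measure_mono_null (compl_subset_compl.2 (hsupp t ht)) (msupport_compl_null _)
      rw [ae_iff]
      exact hnull
    have hbnd : ∀ p : E, p ∈ closedBall (0:E) R → ‖f p‖ ≤ C_H * (1 + ‖y‖ + R) := by
      intro p hp
      rw [mem_closedBall_zero_iff] at hp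
      refine (hHgrowth _).trans ?_
      have h1 : ‖y - p‖ ≤ ‖y‖ + ‖p‖ := norm_sub_le _ _
      nlinarith
    have hint1 : Integrable (fun p : E × E => f p.1) π := by
      apply Integrable.mono' (integrable_const (C_H * (1 + ‖y‖ + R)))
      · exact (hfc.comp continuous_fst).aestronglyMeasurable
      · filter_upwards [hae1] with p hp using hbnd _ hp
    have hint2 : Integrable (fun p : E × E => f p.2) π := by
      apply Integrable.mono' (integrable_const (C_H * (1 + ‖y‖ + R)))
      · exact (hfc.comp continuous_snd).aestronglyMeasurable
      · filter_upwards [hae2] with p hp using hbnd _ hp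
    have hmap1 : ∫ ξ, f ξ ∂(μ s) = ∫ p : E × E, f p.1 ∂π := by
      rw [← hπ1, integral_map measurable_fst.aemeasurable]
      rw [hπ1]
      exact hfc.aestronglyMeasurable
    have hmap2 : ∫ ξ, f ξ ∂(μ t) = ∫ p : E × E, f p.2 ∂π := by
      rw [← hπ2, integral_map measurable_snd.aemeasurable]
      rw [hπ2]
      exact hfc.aestronglyMeasurable
    have hdistint : Integrable (fun p : E × E => dist p.1 p.2) π := by
      apply Integrable.mono' (integrable_const (R + R))
      · exact (continuous_fst.dist continuous_snd).aestronglyMeasurable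
      · filter_upwards [hae1, hae2] with p hp1 hp2
        rw [Real.norm_eq_abs, abs_of_nonneg dist_nonneg]
        rw [mem_closedBall_zero_iff] at hp1 hp2
        calc dist p.1 p.2 ≤ ‖p.1‖ + ‖p.2‖ := by
              rw [dist_eq_norm]
              exact norm_sub_le _ _
          _ ≤ R + R := add_le_add hp1 hp2
    rw [hmap1, hmap2, ← integral_sub hint1 hint2]
    refine (MeasureTheory.norm_integral_le_integral_norm _).trans ?_
    have hmono : ∫ p : E × E, ‖f p.1 - f p.2‖ ∂π ≤ ∫ p : E × E, K_H * dist p.1 p.2 ∂π := by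
      apply integral_mono_ae ((hint1.sub hint2).norm) (hdistint.const_mul K_H)
      filter_upwards [hae1, hae2] with p hp1 hp2
      have ha : y - p.1 ∈ closedBall (0:E) (ρ+R) := by
        rw [mem_closedBall_zero_iff] at hp1 ⊢
        exact (norm_sub_le _ _).trans (add_le_add hy hp1)
      have hb : y - p.2 ∈ closedBall (0:E) (ρ+R) := by
        rw [mem_closedBall_zero_iff] at hp2 ⊢
        exact (norm_sub_le _ _).trans (add_le_add hy hp2)
      have h5 := hKH _ ha _ hb
      have heq : (y - p.1) - (y - p.2) = p.2 - p.1 := by abel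
      rw [heq] at h5
      refine h5.trans ?_
      rw [dist_eq_norm, norm_sub_rev]
    refine hmono.trans ?_
    rw [MeasureTheory.integral_const_mul]
  -- continuity
  intro t ht
  rw [Metric.continuousWithinAt_iff]
  intro ε hε
  obtain ⟨δ, hδ, hδprop⟩ := hcont t ht (ε/(K_H+1)) (by positivity)
  refine ⟨δ, hδ, fun s hsI hst => ?_⟩
  have hW := hδprop s hsI (by rwa [Real.dist_eq] at hst)
  haveI := hprob s hsI
  haveI := hprob t ht
  have hne : ∃ π ∈ couplings (μ s) (μ t), ∫ p : E × E, dist p.1 p.2 ∂π < ε/(K_H+1) := by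
    by_contra hcon
    push_neg at hcon
    have hle : ε/(K_H+1) ≤ W1 (μ s) (μ t) := by
      apply le_csInf
      · refine ⟨_, ⟨(μ s).prod (μ t), ⟨inferInstance, ?_, ?_⟩, rfl⟩⟩
        · rw [Measure.map_fst_prod]
          simp [measure_univ]
        · rw [Measure.map_snd_prod]
          simp [measure_univ]
      · rintro x ⟨π, hπ, rfl⟩
        exact hcon π hπ
    linarith
  obtain ⟨π, hπ, hπlt⟩ := hne
  have hkey := hest s hsI t ht π hπ
  rw [dist_eq_norm]
  have h8 : K_H * ∫ p : E × E, dist p.1 p.2 ∂π ≤ K_H * (ε/(K_H+1)) :=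
    mul_le_mul_of_nonneg_left hπlt.le hKH0
  have h10 : K_H / (K_H+1) < 1 := (div_lt_one (by linarith)).2 (by linarith)
  have h9 : K_H * (ε / (K_H+1)) = ε * (K_H / (K_H+1)) := by ring
  nlinarith [hkey]

end cont


set_option maxHeartbeats 2000000 in
/-- Gronwall-type estimate comparing the flows of two transport fields
`H*μ^i + ∑_ℓ G^ℓ*μ^i_{mℓ}`, `i = 1,2`: there are constants `ρ, L > 0` such that for
initial points `P₁, P₂` in `B(0,r)`,
`|𝒯¹_t(P₁) − 𝒯²_t(P₂)| ≤ e^{Lt}|P₁−P₂| + ∫₀ᵗ e^{L(t−s)} ‖difference of fields‖_{L^∞(B(0,ρ))} ds`. -/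
theorem flow_continuous_dependence_on_field
    {d m : ℕ} (hm : 0 < m) (T R r M C_H : ℝ) (C_G : Fin d → ℝ)
    (hT : 0 ≤ T) (hR : 0 < R) (hr : 0 < r) (hM : 0 ≤ M)
    (H : EuclideanSpace ℝ (Fin d) → EuclideanSpace ℝ (Fin d))
    (G : Fin d → EuclideanSpace ℝ (Fin d) → EuclideanSpace ℝ (Fin d))
    (hHlip : LocallyLipschitz H) (hGlip : ∀ ℓ, LocallyLipschitz (G ℓ))
    (hHgrowth : ∀ y, ‖H y‖ ≤ C_H * (1 + ‖y‖))
    (hGgrowth : ∀ ℓ y, ‖G ℓ y‖ ≤ C_G ℓ * (1 + ‖y‖))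
    (μ₁ μ₂ : ℝ → Measure (EuclideanSpace ℝ (Fin d)))
    (hprob₁ : ∀ t ∈ Icc (0:ℝ) T, IsProbabilityMeasure (μ₁ t))
    (hprob₂ : ∀ t ∈ Icc (0:ℝ) T, IsProbabilityMeasure (μ₂ t))
    (hmom₁ : ∀ t ∈ Icc (0:ℝ) T, HasFiniteFirstMoment (μ₁ t))
    (hmom₂ : ∀ t ∈ Icc (0:ℝ) T, HasFiniteFirstMoment (μ₂ t))
    (hsupp₁ : ∀ t ∈ Icc (0:ℝ) T,
        msupport (μ₁ t) ⊆ closedBall (0 : EuclideanSpace ℝ (Fin d)) R)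
    (hsupp₂ : ∀ t ∈ Icc (0:ℝ) T,
        msupport (μ₂ t) ⊆ closedBall (0 : EuclideanSpace ℝ (Fin d)) R)
    (hcont₁ : ∀ t ∈ Icc (0:ℝ) T, ∀ ε > 0, ∃ δ > 0, ∀ s ∈ Icc (0:ℝ) T,
        |s - t| < δ → W1 (μ₁ s) (μ₁ t) < ε)
    (hcont₂ : ∀ t ∈ Icc (0:ℝ) T, ∀ ε > 0, ∃ δ > 0, ∀ s ∈ Icc (0:ℝ) T,
        |s - t| < δ → W1 (μ₂ s) (μ₂ t) < ε)
    -- the trajectories carrying the weighted empirical measures, and the controls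
    (Y₁ Y₂ : Fin m → ℝ → EuclideanSpace ℝ (Fin d))
    (hY₁cont : ∀ k, ContinuousOn (Y₁ k) (Icc 0 T))
    (hY₂cont : ∀ k, ContinuousOn (Y₂ k) (Icc 0 T))
    (u₁ u₂ : Fin d → Fin m → ℝ → ℝ)
    (hu₁meas : ∀ ℓ k, Measurable (u₁ ℓ k)) (hu₂meas : ∀ ℓ k, Measurable (u₂ ℓ k))
    (hu₁M : ∀ ℓ k, ∀ t ∈ Icc (0:ℝ) T, |u₁ ℓ k t| ≤ M)
    (hu₂M : ∀ ℓ k, ∀ t ∈ Icc (0:ℝ) T, |u₂ ℓ k t| ≤ M)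
    -- the two flows, starting at P₁, P₂ with |Pᵢ| ≤ r
    (P₁ P₂ : EuclideanSpace ℝ (Fin d)) (hP₁ : ‖P₁‖ ≤ r) (hP₂ : ‖P₂‖ ≤ r)
    (X₁ X₂ : ℝ → EuclideanSpace ℝ (Fin d))
    (hX₁cont : ContinuousOn X₁ (Icc 0 T)) (hX₂cont : ContinuousOn X₂ (Icc 0 T))
    (hX₁0 : X₁ 0 = P₁) (hX₂0 : X₂ 0 = P₂)
    (hX₁int : IntervalIntegrable
        (fun s => flowField H G (μ₁ s) (fun ℓ k => u₁ ℓ k s) (fun k => Y₁ k s) (X₁ s))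
        volume 0 T)
    (hX₂int : IntervalIntegrable
        (fun s => flowField H G (μ₂ s) (fun ℓ k => u₂ ℓ k s) (fun k => Y₂ k s) (X₂ s))
        volume 0 T)
    (hX₁ : ∀ t ∈ Icc (0:ℝ) T, X₁ t = P₁ + ∫ s in (0:ℝ)..t,
        flowField H G (μ₁ s) (fun ℓ k => u₁ ℓ k s) (fun k => Y₁ k s) (X₁ s))
    (hX₂ : ∀ t ∈ Icc (0:ℝ) T, X₂ t = P₂ + ∫ s in (0:ℝ)..t,
        flowField H G (μ₂ s) (fun ℓ k => u₂ ℓ k s) (fun k => Y₂ k s) (X₂ s)) :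
    ∃ ρ > 0, ∃ L > 0, ∀ t ∈ Icc (0:ℝ) T,
      ‖X₁ t - X₂ t‖ ≤ Real.exp (L * t) * ‖P₁ - P₂‖
        + ∫ s in (0:ℝ)..t, Real.exp (L * (t - s)) *
            sSup ((fun y =>
              ‖flowField H G (μ₁ s) (fun ℓ k => u₁ ℓ k s) (fun k => Y₁ k s) y
                - flowField H G (μ₂ s) (fun ℓ k => u₂ ℓ k s) (fun k => Y₂ k s) y‖) ''
              closedBall (0 : EuclideanSpace ℝ (Fin d)) ρ) := by
  classical
  have hCH0 : 0 ≤ C_H := by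
    have h3 := hHgrowth 0
    rw [norm_zero] at h3
    have h2 := norm_nonneg (H 0)
    linarith
  have hCG0 : ∀ ℓ, 0 ≤ C_G ℓ := by
    intro ℓ
    have h3 := hGgrowth ℓ 0
    rw [norm_zero] at h3
    have h2 := norm_nonneg (G ℓ 0)
    linarith
  -- uniform bound on the trajectories
  obtain ⟨R_Y, hRY0, hY₁b, hY₂b⟩ :
      ∃ RY : ℝ, 0 ≤ RY ∧ (∀ k, ∀ s ∈ Icc (0:ℝ) T, ‖Y₁ k s‖ ≤ RY)
        ∧ (∀ k, ∀ s ∈ Icc (0:ℝ) T, ‖Y₂ k s‖ ≤ RY) := by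
    have hcomp : IsCompact ((⋃ k, Y₁ k '' Icc 0 T) ∪ ⋃ k, Y₂ k '' Icc 0 T) :=
      ((isCompact_iUnion fun k => isCompact_Icc.image_of_continuousOn (hY₁cont k)).union
        (isCompact_iUnion fun k => isCompact_Icc.image_of_continuousOn (hY₂cont k)))
    obtain ⟨R', hR'⟩ := hcomp.isBounded.exists_norm_le
    refine ⟨max R' 0, le_max_right _ _, ?_, ?_⟩
    · intro k s hs
      refine le_trans (hR' _ ?_) (le_max_left _ _)
      exact Or.inl (mem_iUnion.2 ⟨k, mem_image_of_mem _ hs⟩)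
    · intro k s hs
      refine le_trans (hR' _ ?_) (le_max_left _ _)
      exact Or.inr (mem_iUnion.2 ⟨k, mem_image_of_mem _ hs⟩)
  -- a.e. support bounds
  have hae₁ : ∀ s ∈ Icc (0:ℝ) T, ∀ᵐ ξ ∂(μ₁ s), ‖ξ‖ ≤ R := by
    intro s hs
    filter_upwards [ae_mem_closedBall_of_msupport (hsupp₁ s hs)] with ξ hξ
    rwa [mem_closedBall_zero_iff] at hξ
  have hae₂ : ∀ s ∈ Icc (0:ℝ) T, ∀ᵐ ξ ∂(μ₂ s), ‖ξ‖ ≤ R := by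
    intro s hs
    filter_upwards [ae_mem_closedBall_of_msupport (hsupp₂ s hs)] with ξ hξ
    rwa [mem_closedBall_zero_iff] at hξ
  set SG : ℝ := ∑ ℓ : Fin d, M * C_G ℓ with hSGdef
  have hSG0 : 0 ≤ SG := Finset.sum_nonneg fun ℓ _ => mul_nonneg hM (hCG0 ℓ)
  set A : ℝ := C_H*(1+R) + SG*(1+R_Y) with hAdef
  set B₀ : ℝ := C_H + SG with hB₀def
  have hA0 : 0 ≤ A := by nlinarith [hR.le]
  have hB₀0 : 0 ≤ B₀ := by rw [hB₀def]; linarith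
  set ρ : ℝ := (r + A*T) * Real.exp (B₀*T) with hρdef
  have hρpos : 0 < ρ := by
    apply mul_pos _ (Real.exp_pos _)
    nlinarith
  -- instantiated field norm bounds
  have hFn₁ : ∀ s ∈ Icc (0:ℝ) T, ∀ x : EuclideanSpace ℝ (Fin d),
      ‖flowField H G (μ₁ s) (fun ℓ k => u₁ ℓ k s) (fun k => Y₁ k s) x‖ ≤ A + B₀*‖x‖ := by
    intro s hs x
    haveI := hprob₁ s hs
    exact flowField_norm_le hm hCH0 hR.le hM hRY0 hHgrowth hGgrowth (hae₁ s hs)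
      (fun ℓ k => hu₁M ℓ k s hs) (fun k => hY₁b k s hs) x
  have hFn₂ : ∀ s ∈ Icc (0:ℝ) T, ∀ x : EuclideanSpace ℝ (Fin d),
      ‖flowField H G (μ₂ s) (fun ℓ k => u₂ ℓ k s) (fun k => Y₂ k s) x‖ ≤ A + B₀*‖x‖ := by
    intro s hs x
    haveI := hprob₂ s hs
    exact flowField_norm_le hm hCH0 hR.le hM hRY0 hHgrowth hGgrowth (hae₂ s hs)
      (fun ℓ k => hu₂M ℓ k s hs) (fun k => hY₂b k s hs) x
  -- a priori bound on the trajectories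
  have hapriori : ∀ (X : ℝ → EuclideanSpace ℝ (Fin d)) (P : EuclideanSpace ℝ (Fin d))
      (F : ℝ → EuclideanSpace ℝ (Fin d) → EuclideanSpace ℝ (Fin d)),
      ‖P‖ ≤ r → ContinuousOn X (Icc 0 T) →
      IntervalIntegrable (fun s => F s (X s)) volume 0 T →
      (∀ t ∈ Icc (0:ℝ) T, X t = P + ∫ s in (0:ℝ)..t, F s (X s)) →
      (∀ s ∈ Icc (0:ℝ) T, ∀ x, ‖F s x‖ ≤ A + B₀*‖x‖) →
      ∀ t ∈ Icc (0:ℝ) T, ‖X t‖ ≤ ρ := by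
    intro X P F hP hXc hXi hXeq hFb
    have hineq : ∀ t ∈ Icc (0:ℝ) T, ‖X t‖ ≤ r + ∫ s in (0:ℝ)..t, (B₀ * ‖X s‖ + A) := by
      intro t ht
      obtain ⟨ht0, htT⟩ := ht
      have hsub : uIcc (0:ℝ) t ⊆ uIcc (0:ℝ) T := by
        rw [uIcc_of_le ht0, uIcc_of_le hT]
        exact Icc_subset_Icc le_rfl htT
      have hXi' : IntervalIntegrable (fun s => F s (X s)) volume 0 t := hXi.mono_set hsub
      have hRHSint : IntervalIntegrable (fun s => B₀ * ‖X s‖ + A) volume 0 t := by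
        apply ContinuousOn.intervalIntegrable
        rw [uIcc_of_le ht0]
        exact ((hXc.mono (Icc_subset_Icc le_rfl htT)).norm.const_smul B₀).add continuousOn_const
      calc ‖X t‖ = ‖P + ∫ s in (0:ℝ)..t, F s (X s)‖ := by rw [hXeq t ⟨ht0, htT⟩]
        _ ≤ ‖P‖ + ‖∫ s in (0:ℝ)..t, F s (X s)‖ := norm_add_le _ _
        _ ≤ r + ∫ s in (0:ℝ)..t, ‖F s (X s)‖ :=
            add_le_add hP (intervalIntegral.norm_integral_le_integral_norm ht0)
        _ ≤ r + ∫ s in (0:ℝ)..t, (B₀ * ‖X s‖ + A) := by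
            apply add_le_add_right
            apply intervalIntegral.integral_mono_on ht0 hXi'.norm hRHSint
            intro s hs
            have := hFb s ⟨hs.1, hs.2.trans htT⟩ (X s)
            linarith
    have hg := gronwall_integral (φ := fun s => ‖X s‖) (c := fun _ => A) (a := r) (B := B₀)
      hB₀0 hT hXc.norm intervalIntegrable_const hineq
    intro t ht
    obtain ⟨ht0, htT⟩ := ht
    have h1 := hg t ⟨ht0, htT⟩
    have hexp_le : Real.exp (B₀*t) ≤ Real.exp (B₀*T) :=
      Real.exp_le_exp.2 (by nlinarith)
    have hintle : ∫ s in (0:ℝ)..t, Real.exp (B₀*(t-s)) * A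
        ≤ ∫ s in (0:ℝ)..t, Real.exp (B₀*T) * A := by
      apply intervalIntegral.integral_mono_on ht0 _ intervalIntegrable_const
      · intro s hs
        apply mul_le_mul_of_nonneg_right _ hA0
        exact Real.exp_le_exp.2 (by nlinarith [hs.1, hs.2])
      · apply Continuous.intervalIntegrable
        fun_prop
    rw [intervalIntegral.integral_const] at hintle
    simp only [smul_eq_mul, sub_zero] at hintle
    have hexpA : 0 ≤ Real.exp (B₀*T) * A := mul_nonneg (Real.exp_pos _).le hA0
    have ht' : t * (Real.exp (B₀*T) * A) ≤ T * (Real.exp (B₀*T) * A) :=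
      mul_le_mul_of_nonneg_right htT hexpA
    have hrρ : Real.exp (B₀*t) * r + T * (Real.exp (B₀*T) * A) ≤ ρ := by
      rw [hρdef]
      have : (r + A*T) * Real.exp (B₀*T) = Real.exp (B₀*T) * r + T * (Real.exp (B₀*T) * A) := by
        ring
      rw [this]
      have := mul_le_mul_of_nonneg_right hexp_le hr.le
      linarith
    linarith
  have hX₁b : ∀ s ∈ Icc (0:ℝ) T, ‖X₁ s‖ ≤ ρ :=
    hapriori X₁ P₁ _ hP₁ hX₁cont hX₁int hX₁ hFn₁
  have hX₂b : ∀ s ∈ Icc (0:ℝ) T, ‖X₂ s‖ ≤ ρ :=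
    hapriori X₂ P₂ _ hP₂ hX₂cont hX₂int hX₂ hFn₂
  -- Lipschitz constants on the relevant compact balls
  obtain ⟨K_H, hKH0, hKH⟩ := hHlip.exists_bound_on_compact
    (isCompact_closedBall (0 : EuclideanSpace ℝ (Fin d)) (ρ+R))
  choose K_G hKG0 hKG using fun ℓ => (hGlip ℓ).exists_bound_on_compact
    (isCompact_closedBall (0 : EuclideanSpace ℝ (Fin d)) (ρ+R_Y))
  set L₀ : ℝ := K_H + ∑ ℓ : Fin d, M * K_G ℓ with hL₀def
  have hL₀0 : 0 ≤ L₀ :=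
    add_nonneg hKH0 (Finset.sum_nonneg fun ℓ _ => mul_nonneg hM (hKG0 ℓ))
  set L : ℝ := L₀ + 1 with hLdef
  have hL : 0 < L := by rw [hLdef]; linarith
  refine ⟨ρ, hρpos, L, hL, ?_⟩
  -- Lipschitz property of the fields on the ball
  have hFl₁ : ∀ s ∈ Icc (0:ℝ) T, ∀ x x' : EuclideanSpace ℝ (Fin d), ‖x‖ ≤ ρ → ‖x'‖ ≤ ρ →
      ‖flowField H G (μ₁ s) (fun ℓ k => u₁ ℓ k s) (fun k => Y₁ k s) x
        - flowField H G (μ₁ s) (fun ℓ k => u₁ ℓ k s) (fun k => Y₁ k s) x'‖ ≤ L₀ * ‖x - x'‖ := by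
    intro s hs x x' hx hx'
    haveI := hprob₁ s hs
    exact flowField_lip hm hHlip.continuous hHgrowth hM hKH hKG hKH0 hKG0 (hae₁ s hs)
      (fun ℓ k => hu₁M ℓ k s hs) (fun k => hY₁b k s hs) hx hx'
  have hFl₂ : ∀ s ∈ Icc (0:ℝ) T, ∀ x x' : EuclideanSpace ℝ (Fin d), ‖x‖ ≤ ρ → ‖x'‖ ≤ ρ →
      ‖flowField H G (μ₂ s) (fun ℓ k => u₂ ℓ k s) (fun k => Y₂ k s) x
        - flowField H G (μ₂ s) (fun ℓ k => u₂ ℓ k s) (fun k => Y₂ k s) x'‖ ≤ L₀ * ‖x - x'‖ := by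
    intro s hs x x' hx hx'
    haveI := hprob₂ s hs
    exact flowField_lip hm hHlip.continuous hHgrowth hM hKH hKG hKH0 hKG0 (hae₂ s hs)
      (fun ℓ k => hu₂M ℓ k s hs) (fun k => hY₂b k s hs) hx hx'
  -- bound on the field difference over the ball
  set C_g : ℝ := 2*(A + B₀*ρ) with hCgdef
  have hCg0 : 0 ≤ C_g := by
    rw [hCgdef]
    nlinarith
  have hqb : ∀ s ∈ Icc (0:ℝ) T, ∀ y ∈ closedBall (0 : EuclideanSpace ℝ (Fin d)) ρ,
      ‖flowField H G (μ₁ s) (fun ℓ k => u₁ ℓ k s) (fun k => Y₁ k s) y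
        - flowField H G (μ₂ s) (fun ℓ k => u₂ ℓ k s) (fun k => Y₂ k s) y‖ ≤ C_g := by
    intro s hs y hy
    rw [mem_closedBall_zero_iff] at hy
    have h1 := hFn₁ s hs y
    have h2 := hFn₂ s hs y
    have h3 := norm_sub_le (flowField H G (μ₁ s) (fun ℓ k => u₁ ℓ k s) (fun k => Y₁ k s) y)
      (flowField H G (μ₂ s) (fun ℓ k => u₂ ℓ k s) (fun k => Y₂ k s) y)
    rw [hCgdef]
    nlinarith
  have hbdd : ∀ s ∈ Icc (0:ℝ) T, BddAbove ((fun y =>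
      ‖flowField H G (μ₁ s) (fun ℓ k => u₁ ℓ k s) (fun k => Y₁ k s) y
        - flowField H G (μ₂ s) (fun ℓ k => u₂ ℓ k s) (fun k => Y₂ k s) y‖) ''
      closedBall (0 : EuclideanSpace ℝ (Fin d)) ρ) := by
    intro s hs
    refine ⟨C_g, ?_⟩
    rintro v ⟨y, hy, rfl⟩
    exact hqb s hs y hy
  have himgne : ((fun y : EuclideanSpace ℝ (Fin d) => (0:ℝ)) '' ∅).Nonempty ∨ True := Or.inr trivial
  -- dense sequence in the closed ball
  haveI : Nonempty (closedBall (0 : EuclideanSpace ℝ (Fin d)) ρ) :=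
    ⟨⟨0, mem_closedBall_self hρpos.le⟩⟩
  obtain ⟨e, he⟩ := TopologicalSpace.exists_dense_seq (closedBall (0 : EuclideanSpace ℝ (Fin d)) ρ)
  -- continuity in time of the convolution terms
  have hIcont₁ : ∀ y : EuclideanSpace ℝ (Fin d), ‖y‖ ≤ ρ →
      ContinuousOn (fun s => ∫ ξ, H (y - ξ) ∂(μ₁ s)) (Icc 0 T) :=
    fun y hy => conv_continuousOn hHlip.continuous hT hHgrowth hKH hKH0 hR.le
      hprob₁ hsupp₁ hcont₁ hy
  have hIcont₂ : ∀ y : EuclideanSpace ℝ (Fin d), ‖y‖ ≤ ρ →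
      ContinuousOn (fun s => ∫ ξ, H (y - ξ) ∂(μ₂ s)) (Icc 0 T) :=
    fun y hy => conv_continuousOn hHlip.continuous hT hHgrowth hKH hKH0 hR.le
      hprob₂ hsupp₂ hcont₂ hy
  -- retraction onto the time interval
  set pr : ℝ → ℝ := fun s => max 0 (min s T) with hprdef
  have hprcont : Continuous pr := continuous_const.max (continuous_id.min continuous_const)
  have hprmem : ∀ s, pr s ∈ Icc (0:ℝ) T :=
    fun s => ⟨le_max_left _ _, max_le hT (min_le_right _ _)⟩
  have hprid : ∀ s ∈ Icc (0:ℝ) T, pr s = s := by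
    intro s hs
    rw [hprdef]
    simp only [min_eq_left hs.2, max_eq_right hs.1]
  -- measurable-in-time extensions of the fields
  set Fh₁ : ℝ → EuclideanSpace ℝ (Fin d) → EuclideanSpace ℝ (Fin d) := fun s y =>
    (∫ ξ, H (y - ξ) ∂(μ₁ (pr s)))
      + ∑ ℓ : Fin d, (m:ℝ)⁻¹ • ∑ k : Fin m, u₁ ℓ k s • G ℓ (y - Y₁ k (pr s)) with hFh₁def
  set Fh₂ : ℝ → EuclideanSpace ℝ (Fin d) → EuclideanSpace ℝ (Fin d) := fun s y =>
    (∫ ξ, H (y - ξ) ∂(μ₂ (pr s)))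
      + ∑ ℓ : Fin d, (m:ℝ)⁻¹ • ∑ k : Fin m, u₂ ℓ k s • G ℓ (y - Y₂ k (pr s)) with hFh₂def
  have hFh₁eq : ∀ s ∈ Icc (0:ℝ) T, ∀ y, Fh₁ s y
      = flowField H G (μ₁ s) (fun ℓ k => u₁ ℓ k s) (fun k => Y₁ k s) y := by
    intro s hs y
    rw [hFh₁def]
    simp only [flowField, hprid s hs]
  have hFh₂eq : ∀ s ∈ Icc (0:ℝ) T, ∀ y, Fh₂ s y
      = flowField H G (μ₂ s) (fun ℓ k => u₂ ℓ k s) (fun k => Y₂ k s) y := by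
    intro s hs y
    rw [hFh₂def]
    simp only [flowField, hprid s hs]
  have hFh₁m : ∀ y : EuclideanSpace ℝ (Fin d), ‖y‖ ≤ ρ → Measurable (fun s => Fh₁ s y) := by
    intro y hy
    rw [hFh₁def]
    apply Measurable.add
    · exact (((hIcont₁ y hy).comp_continuous hprcont hprmem)).measurable
    · apply Finset.measurable_sum
      intro ℓ _
      apply Measurable.fun_const_smul
      apply Finset.measurable_sum
      intro k _
      apply Measurable.fun_smul (hu₁meas ℓ k)
      apply Continuous.measurable
      exact (hGlip ℓ).continuous.comp
        (continuous_const.sub ((hY₁cont k).comp_continuous hprcont hprmem))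
  have hFh₂m : ∀ y : EuclideanSpace ℝ (Fin d), ‖y‖ ≤ ρ → Measurable (fun s => Fh₂ s y) := by
    intro y hy
    rw [hFh₂def]
    apply Measurable.add
    · exact (((hIcont₂ y hy).comp_continuous hprcont hprmem)).measurable
    · apply Finset.measurable_sum
      intro ℓ _
      apply Measurable.fun_const_smul
      apply Finset.measurable_sum
      intro k _
      apply Measurable.fun_smul (hu₂meas ℓ k)
      apply Continuous.measurable
      exact (hGlip ℓ).continuous.comp
        (continuous_const.sub ((hY₂cont k).comp_continuous hprcont hprmem))
  -- the (truncated) approximating functions and the measurable envelope ĝ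
  set qh : ℕ → ℝ → ℝ := fun n s => min ‖Fh₁ s (e n) - Fh₂ s (e n)‖ C_g with hqhdef
  have hqhm : ∀ n, Measurable (qh n) := by
    intro n
    apply Measurable.min _ measurable_const
    have hyn : ‖(e n : EuclideanSpace ℝ (Fin d))‖ ≤ ρ :=
      mem_closedBall_zero_iff.1 (e n).2
    exact ((hFh₁m _ hyn).sub (hFh₂m _ hyn)).norm
  have hqh0 : ∀ n s, 0 ≤ qh n s := fun n s => le_min (norm_nonneg _) hCg0
  have hqhle : ∀ n s, qh n s ≤ C_g := fun n s => min_le_right _ _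
  set gh : ℝ → ℝ := fun s => ⨆ n, qh n s with hghdef
  have hghm : Measurable gh := Measurable.iSup hqhm
  have hrange_bdd : ∀ s, BddAbove (Set.range fun n => qh n s) := by
    intro s
    refine ⟨C_g, ?_⟩
    rintro v ⟨n, rfl⟩
    exact hqhle n s
  have hgh0 : ∀ s, 0 ≤ gh s := by
    intro s
    exact le_trans (hqh0 0 s) (le_ciSup (hrange_bdd s) 0)
  have hghle : ∀ s, gh s ≤ C_g := fun s => ciSup_le (fun n => hqhle n s)
  -- gh agrees with the sup of the field difference on [0,T]
  have hgeq : ∀ s ∈ Icc (0:ℝ) T, gh s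
      = sSup ((fun y =>
          ‖flowField H G (μ₁ s) (fun ℓ k => u₁ ℓ k s) (fun k => Y₁ k s) y
            - flowField H G (μ₂ s) (fun ℓ k => u₂ ℓ k s) (fun k => Y₂ k s) y‖) ''
          closedBall (0 : EuclideanSpace ℝ (Fin d)) ρ) := by
    intro s hs
    set q : EuclideanSpace ℝ (Fin d) → ℝ := fun y =>
      ‖flowField H G (μ₁ s) (fun ℓ k => u₁ ℓ k s) (fun k => Y₁ k s) y
        - flowField H G (μ₂ s) (fun ℓ k => u₂ ℓ k s) (fun k => Y₂ k s) y‖ with hqdef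
    have hqq : ∀ n, qh n s = q (e n) := by
      intro n
      rw [hqhdef]
      simp only [hFh₁eq s hs, hFh₂eq s hs]
      exact min_eq_left (hqb s hs _ (e n).2)
    apply le_antisymm
    · apply ciSup_le
      intro n
      rw [hqq n]
      exact le_csSup (hbdd s hs) (mem_image_of_mem _ (e n).2)
    · apply csSup_le ⟨_, mem_image_of_mem _ (mem_closedBall_self hρpos.le)⟩
      rintro v ⟨y, hy, rfl⟩
      apply le_of_forall_pos_le_add
      intro ε hε
      obtain ⟨n, hn⟩ := he.exists_dist_lt ⟨y, hy⟩ (show (0:ℝ) < ε/(2*L₀+1) by positivity)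
      have hdist : ‖y - (e n : EuclideanSpace ℝ (Fin d))‖ < ε/(2*L₀+1) := by
        rw [← dist_eq_norm]
        rw [Subtype.dist_eq] at hn
        exact hn
      have hq_lip : q y ≤ q (e n) + (2*L₀) * ‖y - (e n : EuclideanSpace ℝ (Fin d))‖ := by
        have hyρ : ‖y‖ ≤ ρ := mem_closedBall_zero_iff.1 hy
        have henρ : ‖(e n : EuclideanSpace ℝ (Fin d))‖ ≤ ρ :=
          mem_closedBall_zero_iff.1 (e n).2
        have h1 := hFl₁ s hs y (e n) hyρ henρ
        have h2 := hFl₂ s hs y (e n) hyρ henρ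
        have h3 : q y - q (e n)
            ≤ ‖(flowField H G (μ₁ s) (fun ℓ k => u₁ ℓ k s) (fun k => Y₁ k s) y
                - flowField H G (μ₂ s) (fun ℓ k => u₂ ℓ k s) (fun k => Y₂ k s) y)
              - (flowField H G (μ₁ s) (fun ℓ k => u₁ ℓ k s) (fun k => Y₁ k s) (e n)
                - flowField H G (μ₂ s) (fun ℓ k => u₂ ℓ k s) (fun k => Y₂ k s) (e n))‖ := by
          rw [hqdef]
          exact sub_le_iff_le_add'.2 (norm_le_insert' _ _)
        have h4 : ‖(flowField H G (μ₁ s) (fun ℓ k => u₁ ℓ k s) (fun k => Y₁ k s) y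
                - flowField H G (μ₂ s) (fun ℓ k => u₂ ℓ k s) (fun k => Y₂ k s) y)
              - (flowField H G (μ₁ s) (fun ℓ k => u₁ ℓ k s) (fun k => Y₁ k s) (e n)
                - flowField H G (μ₂ s) (fun ℓ k => u₂ ℓ k s) (fun k => Y₂ k s) (e n))‖
            ≤ L₀ * ‖y - (e n : EuclideanSpace ℝ (Fin d))‖
              + L₀ * ‖y - (e n : EuclideanSpace ℝ (Fin d))‖ := by
          have h5 : (flowField H G (μ₁ s) (fun ℓ k => u₁ ℓ k s) (fun k => Y₁ k s) y
                - flowField H G (μ₂ s) (fun ℓ k => u₂ ℓ k s) (fun k => Y₂ k s) y)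
              - (flowField H G (μ₁ s) (fun ℓ k => u₁ ℓ k s) (fun k => Y₁ k s) (e n)
                - flowField H G (μ₂ s) (fun ℓ k => u₂ ℓ k s) (fun k => Y₂ k s) (e n))
              = (flowField H G (μ₁ s) (fun ℓ k => u₁ ℓ k s) (fun k => Y₁ k s) y
                - flowField H G (μ₁ s) (fun ℓ k => u₁ ℓ k s) (fun k => Y₁ k s) (e n))
              - (flowField H G (μ₂ s) (fun ℓ k => u₂ ℓ k s) (fun k => Y₂ k s) y
                - flowField H G (μ₂ s) (fun ℓ k => u₂ ℓ k s) (fun k => Y₂ k s) (e n)) := by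
            abel
          rw [h5]
          exact (norm_sub_le _ _).trans (add_le_add h1 h2)
        linarith
      have h6 : q (e n) ≤ gh s := by
        rw [← hqq n]
        exact le_ciSup (hrange_bdd s) n
      have h7 : (2*L₀) * ‖y - (e n : EuclideanSpace ℝ (Fin d))‖ ≤ ε := by
        have h8 : (2*L₀) * ‖y - (e n : EuclideanSpace ℝ (Fin d))‖
            ≤ (2*L₀) * (ε/(2*L₀+1)) :=
          mul_le_mul_of_nonneg_left hdist.le (by linarith)
        have h9 : (2*L₀) * (ε/(2*L₀+1)) ≤ ε := by
          rw [mul_div_assoc']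
          rw [div_le_iff₀ (by linarith)]
          nlinarith
        exact h8.trans h9
      linarith
  -- interval integrability of gh
  have hghint : IntervalIntegrable gh volume 0 T := by
    rw [intervalIntegrable_iff_integrableOn_Ioc_of_le hT]
    apply Measure.integrableOn_of_bounded (measure_Ioc_lt_top.ne) hghm.aestronglyMeasurable
    apply ae_of_all
    intro s
    rw [Real.norm_eq_abs, abs_of_nonneg (hgh0 s)]
    exact hghle s
  -- main Gronwall argument
  have hineqm : ∀ t ∈ Icc (0:ℝ) T, ‖X₁ t - X₂ t‖
      ≤ ‖P₁ - P₂‖ + ∫ s in (0:ℝ)..t, (L * ‖X₁ s - X₂ s‖ + gh s) := by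
    intro t ht
    obtain ⟨ht0, htT⟩ := ht
    have hsub : uIcc (0:ℝ) t ⊆ uIcc (0:ℝ) T := by
      rw [uIcc_of_le ht0, uIcc_of_le hT]
      exact Icc_subset_Icc le_rfl htT
    have hF₁i := hX₁int.mono_set hsub
    have hF₂i := hX₂int.mono_set hsub
    have heq : X₁ t - X₂ t = (P₁ - P₂) + ∫ s in (0:ℝ)..t,
        (flowField H G (μ₁ s) (fun ℓ k => u₁ ℓ k s) (fun k => Y₁ k s) (X₁ s)
          - flowField H G (μ₂ s) (fun ℓ k => u₂ ℓ k s) (fun k => Y₂ k s) (X₂ s)) := by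
      rw [hX₁ t ⟨ht0, htT⟩, hX₂ t ⟨ht0, htT⟩, intervalIntegral.integral_sub hF₁i hF₂i]
      abel
    have hRHSint : IntervalIntegrable (fun s => L * ‖X₁ s - X₂ s‖ + gh s) volume 0 t := by
      apply IntervalIntegrable.add _ (hghint.mono_set hsub)
      apply ContinuousOn.intervalIntegrable
      rw [uIcc_of_le ht0]
      exact (((hX₁cont.sub hX₂cont).mono (Icc_subset_Icc le_rfl htT)).norm).const_smul L
    calc ‖X₁ t - X₂ t‖
        ≤ ‖P₁ - P₂‖ + ‖∫ s in (0:ℝ)..t,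
            (flowField H G (μ₁ s) (fun ℓ k => u₁ ℓ k s) (fun k => Y₁ k s) (X₁ s)
              - flowField H G (μ₂ s) (fun ℓ k => u₂ ℓ k s) (fun k => Y₂ k s) (X₂ s))‖ := by
          rw [heq]
          exact norm_add_le _ _
      _ ≤ ‖P₁ - P₂‖ + ∫ s in (0:ℝ)..t,
            ‖flowField H G (μ₁ s) (fun ℓ k => u₁ ℓ k s) (fun k => Y₁ k s) (X₁ s)
              - flowField H G (μ₂ s) (fun ℓ k => u₂ ℓ k s) (fun k => Y₂ k s) (X₂ s)‖ :=
          add_le_add_right (intervalIntegral.norm_integral_le_integral_norm ht0) _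
      _ ≤ ‖P₁ - P₂‖ + ∫ s in (0:ℝ)..t, (L * ‖X₁ s - X₂ s‖ + gh s) := by
          apply add_le_add_right
          apply intervalIntegral.integral_mono_on ht0 (hF₁i.sub hF₂i).norm hRHSint
          intro s hs
          have hs' : s ∈ Icc (0:ℝ) T := ⟨hs.1, hs.2.trans htT⟩
          have e1 : flowField H G (μ₁ s) (fun ℓ k => u₁ ℓ k s) (fun k => Y₁ k s) (X₁ s)
              - flowField H G (μ₂ s) (fun ℓ k => u₂ ℓ k s) (fun k => Y₂ k s) (X₂ s)
              = (flowField H G (μ₁ s) (fun ℓ k => u₁ ℓ k s) (fun k => Y₁ k s) (X₁ s)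
                - flowField H G (μ₁ s) (fun ℓ k => u₁ ℓ k s) (fun k => Y₁ k s) (X₂ s))
              + (flowField H G (μ₁ s) (fun ℓ k => u₁ ℓ k s) (fun k => Y₁ k s) (X₂ s)
                - flowField H G (μ₂ s) (fun ℓ k => u₂ ℓ k s) (fun k => Y₂ k s) (X₂ s)) := by
            abel
          have h1 := hFl₁ s hs' (X₁ s) (X₂ s) (hX₁b s hs') (hX₂b s hs')
          have h2 : ‖flowField H G (μ₁ s) (fun ℓ k => u₁ ℓ k s) (fun k => Y₁ k s) (X₂ s)
                - flowField H G (μ₂ s) (fun ℓ k => u₂ ℓ k s) (fun k => Y₂ k s) (X₂ s)‖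
              ≤ gh s := by
            rw [hgeq s hs']
            apply le_csSup (hbdd s hs')
            exact ⟨X₂ s, mem_closedBall_zero_iff.2 (hX₂b s hs'), rfl⟩
          have h3 := norm_add_le
            (flowField H G (μ₁ s) (fun ℓ k => u₁ ℓ k s) (fun k => Y₁ k s) (X₁ s)
                - flowField H G (μ₁ s) (fun ℓ k => u₁ ℓ k s) (fun k => Y₁ k s) (X₂ s))
            (flowField H G (μ₁ s) (fun ℓ k => u₁ ℓ k s) (fun k => Y₁ k s) (X₂ s)
                - flowField H G (μ₂ s) (fun ℓ k => u₂ ℓ k s) (fun k => Y₂ k s) (X₂ s))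
          rw [e1]
          have h9 : L₀ * ‖X₁ s - X₂ s‖ ≤ L * ‖X₁ s - X₂ s‖ := by
            apply mul_le_mul_of_nonneg_right _ (norm_nonneg _)
            rw [hLdef]
            linarith
          linarith
  have hmain := gronwall_integral (φ := fun s => ‖X₁ s - X₂ s‖) (c := gh)
      (a := ‖P₁ - P₂‖) (B := L) hL.le hT ((hX₁cont.sub hX₂cont).norm) hghint hineqm
  intro t ht
  have h := hmain t ht
  have hcongr : ∫ s in (0:ℝ)..t, Real.exp (L*(t-s)) * gh s
      = ∫ s in (0:ℝ)..t, Real.exp (L * (t - s)) *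
          sSup ((fun y =>
            ‖flowField H G (μ₁ s) (fun ℓ k => u₁ ℓ k s) (fun k => Y₁ k s) y
              - flowField H G (μ₂ s) (fun ℓ k => u₂ ℓ k s) (fun k => Y₂ k s) y‖) ''
            closedBall (0 : EuclideanSpace ℝ (Fin d)) ρ) := by
    apply intervalIntegral.integral_congr
    intro s hs
    rw [uIcc_of_le ht.1] at hs
    have hs' : s ∈ Icc (0:ℝ) T := ⟨hs.1, hs.2.trans ht.2⟩
    dsimp only
    rw [hgeq s hs']
  rw [hcongr] at h
  have : Real.exp (L*t) * ‖P₁ - P₂‖ = Real.exp (L * t) * ‖P₁ - P₂‖ := rfl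
  linarith [h]

end
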